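/- arXiv:2010.02641 — 4 statements merged into one kernel-verified Lean document; each statement's English description precedes it below -/
import Mathlib

section
/- Let 𝔠 be a complex subspace of E, let 𝔯 be a totally real subspace of E orthogonal to 𝔠, let T ∈ 𝔯, and let W ∈ E be orthogonal to 𝔠 ⊕ ℂ𝔯 (where ℂ𝔯 = 𝔯 + J𝔯). Then exp(ad(2JT+2W))(ℝB ⊕ 𝔠 ⊕ 𝔯 ⊕ ℝZ) is a CR subspace of 𝔰 if and only if W = 0; in that case its maximal complex subspace is ℝ(B − JT) ⊕ ℝ(T + Z) ⊕ 𝔠, whose orthogonal complement (𝔯 ⊖ ℝT) ⊕ ℝ(T − ‖T‖²Z) is totally real. -/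
open scoped RealInnerProductSpace

noncomputable section

namespace CHn

/-- `E n` is `ℂ^{n-1}`, viewed as a real inner product space with `⟪U,V⟫ = Re⟪U,V⟫_ℂ`
and complex structure `JU = iU`. -/
abbrev E (n : ℕ) := EuclideanSpace ℂ (Fin (n - 1))

/-- The solvable part `𝔰 = 𝔞 ⊕ 𝔫` of the Iwasawa decomposition of `𝔰𝔲(1,n)`, modeled as
`ℝB ⊕ E ⊕ ℝZ`; the element `(a, U, x)` represents `aB + U + xZ`. -/
abbrev S (n : ℕ) := ℝ × E n × ℝ

variable (n : ℕ)

/-- The vector `B`. -/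
def B : S n := (1, 0, 0)

/-- The vector `Z`. -/
def Z : S n := (0, 0, 1)

/-- The inner product of `𝔰` (`B`, `Z` unit, orthogonal direct sum `ℝB ⊕ E ⊕ ℝZ`). -/
def sInner (X Y : S n) : ℝ := X.1 * Y.1 + ⟪X.2.1, Y.2.1⟫ + X.2.2 * Y.2.2

/-- The ambient complex structure on `𝔰`: `J(aB + U + xZ) = -xB + JU + aZ`. -/
def Js : S n →ₗ[ℝ] S n where
  toFun X := (-X.2.2, Complex.I • X.2.1, X.1)
  map_add' X Y := by
    refine Prod.ext ?_ (Prod.ext ?_ ?_)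
    · simp; ring
    · simp [smul_add]
    · simp
  map_smul' c X := by
    refine Prod.ext ?_ (Prod.ext ?_ ?_)
    · simp only [Prod.smul_fst, Prod.smul_snd, smul_eq_mul, RingHom.id_apply]; ring
    · simp [Prod.smul_fst, Prod.smul_snd, smul_comm c Complex.I]
    · simp

/-- The Lie bracket of `𝔰`:
`[aB + U + xZ, bB + V + yZ] = (1/2)(aV - bU) + (ay - bx + ⟪JU, V⟫)Z`. -/
def bra (X Y : S n) : S n :=
  (0, (2⁻¹ : ℝ) • (X.1 • Y.2.1 - Y.1 • X.2.1),
    X.1 * Y.2.2 - Y.1 * X.2.2 + ⟪Complex.I • X.2.1, Y.2.1⟫)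

/-- `ad(X) = [X, ·]`, a (continuous) linear endomorphism of `𝔰`. -/
def ad (X : S n) : S n →L[ℝ] S n :=
  LinearMap.toContinuousLinearMap
    { toFun := bra n X
      map_add' := fun Y Y' => by
        unfold bra
        refine Prod.ext ?_ (Prod.ext ?_ ?_)
        · simp
        · simp only [Prod.fst_add, Prod.snd_add]
          module
        · simp only [Prod.fst_add, Prod.snd_add, inner_add_right]
          ring
      map_smul' := fun c Y => by
        unfold bra
        have h : ⟪Complex.I • X.2.1, c • Y.2.1⟫ = c * ⟪Complex.I • X.2.1, Y.2.1⟫ :=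
          real_inner_smul_right _ _ _
        refine Prod.ext ?_ (Prod.ext ?_ ?_)
        · simp
        · simp only [Prod.smul_fst, Prod.smul_snd, smul_eq_mul, RingHom.id_apply]
          module
        · simp only [Prod.smul_fst, Prod.smul_snd, smul_eq_mul, h, RingHom.id_apply]
          ring }

/-- `exp(ad(X)) = Σ_{k ≥ 0} ad(X)^k / k!`. -/
def expAd (X : S n) : S n →L[ℝ] S n := NormedSpace.exp (ad n X)

/-- `ρ(t) = (e^t - 1)/t` for `t ≠ 0`, `ρ(0) = 1`. -/
def rho (t : ℝ) : ℝ := if t = 0 then 1 else (Real.exp t - 1) / t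

/-- The Iwasawa group `AN`, modeled as `G = ℝ × E × ℝ`. -/
abbrev G (n : ℕ) := ℝ × E n × ℝ

/-- The product of `G`:
`(a,P,p)·(b,Q,q) = (a+b, P + e^{a/2}Q, p + e^a q + (1/2)e^{a/2}⟪JP,Q⟫)`. -/
def gmul (g h : G n) : G n :=
  (g.1 + h.1, g.2.1 + Real.exp (g.1 / 2) • h.2.1,
    g.2.2 + Real.exp g.1 * h.2.2 + 2⁻¹ * Real.exp (g.1 / 2) * ⟪Complex.I • g.2.1, h.2.1⟫)

/-- The Lie exponential `Exp : 𝔰 → G`, `Exp(cB + W + zZ) = (c, ρ(c/2)W, ρ(c)z)`. -/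
def Exp (X : S n) : G n := (X.1, rho (X.1 / 2) • X.2.1, rho X.1 * X.2.2)

/-- The inclusion of `E` into `𝔰`. -/
def inE : E n →ₗ[ℝ] S n where
  toFun U := (0, U, 0)
  map_add' U V := by refine Prod.ext ?_ (Prod.ext ?_ ?_) <;> simp
  map_smul' c U := by refine Prod.ext ?_ (Prod.ext ?_ ?_) <;> simp

/-- A real subspace of `E` is totally real if `⟪Ju, v⟫ = 0` for all its elements. -/
def TotallyRealE (V : Submodule ℝ (E n)) : Prop :=
  ∀ u ∈ V, ∀ v ∈ V, ⟪Complex.I • u, v⟫ = 0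

/-- A real subspace of `E` is complex if it is `J`-invariant. -/
def IsComplexE (V : Submodule ℝ (E n)) : Prop :=
  ∀ u ∈ V, Complex.I • u ∈ V

/-- The maximal complex subspace `V ∩ JV` of a real subspace `V` of `E`. -/
def maxCE (V : Submodule ℝ (E n)) : Set (E n) := {w | w ∈ V ∧ Complex.I • w ∈ V}

/-- `V` is a CR subspace of `E` if the orthogonal complement in `V` of its maximal
complex subspace `V ∩ JV` is totally real. -/
def IsCRE (V : Submodule ℝ (E n)) : Prop :=
  ∀ u ∈ V, ∀ v ∈ V, (∀ w ∈ maxCE n V, ⟪u, w⟫ = 0) →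
    (∀ w ∈ maxCE n V, ⟪v, w⟫ = 0) → ⟪Complex.I • u, v⟫ = 0

/-- A subset of `𝔰` is totally real if `⟪Ju, v⟫ = 0` for all its elements. -/
def TotallyRealS (V : Set (S n)) : Prop := ∀ u ∈ V, ∀ v ∈ V, sInner n (Js n u) v = 0

/-- The maximal complex subspace `V ∩ JV` of a real subspace `V` of `𝔰`. -/
def maxCS (V : Set (S n)) : Set (S n) := {x | x ∈ V ∧ Js n x ∈ V}

/-- `V` is a CR subspace of `𝔰` if the orthogonal complement in `V` of its maximal
complex subspace `V ∩ JV` is totally real. -/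
def IsCRS (V : Set (S n)) : Prop :=
  ∀ u ∈ V, ∀ v ∈ V, (∀ w ∈ maxCS n V, sInner n u w = 0) →
    (∀ w ∈ maxCS n V, sInner n v w = 0) → sInner n (Js n u) v = 0


end CHn

/-!
For `U ∈ E` the operator `ad U` squares to zero, so `exp(ad 2K) = 1 + ad 2K` with `K = JT + W`,
and the image of `ℝB ⊕ 𝔠 ⊕ 𝔯 ⊕ ℝZ` is the sheared subspace `V = {aB + X + zZ | X + aK ∈ 𝔠 ⊕ 𝔯}`.
For `w = aB + X + yZ`, splitting the condition `w, Jw ∈ V` along the orthogonal decomposition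
`E = 𝔠 ⊕ 𝔯 ⊕ J𝔯 ⊕ ℂW ⊕ ⋯` gives `X = C + yT - aK` with `C ∈ 𝔠` and `aW = yW = 0`.
If `W ≠ 0` the maximal complex subspace of `V` is therefore just `𝔠`, and `B - K`, `Z` lie in its
orthogonal complement with `⟪J(B - K), Z⟫ = 1`. If `W = 0` it is `ℝ(B - JT) ⊕ ℝ(T + Z) ⊕ 𝔠`,
and its orthogonal complement is `{R - ⟪R, T⟫Z | R ∈ 𝔯}`, totally real because `𝔯` is.
-/

theorem NormedSpace.exp_eq_one_add_of_mul_self_eq_zero {𝔸 : Type*} [Ring 𝔸] [Algebra ℚ 𝔸]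
    [TopologicalSpace 𝔸] [IsTopologicalRing 𝔸] {a : 𝔸} (h : a * a = 0) :
    NormedSpace.exp a = 1 + a := by
  have hpow : ∀ k ∉ ({0, 1} : Finset ℕ), a ^ k = 0 := fun k hk => by
    obtain ⟨m, rfl⟩ : ∃ m, k = m + 2 := ⟨k - 2, by simp only [Finset.mem_insert, Finset.mem_singleton] at hk; omega⟩
    rw [pow_add, sq, h, mul_zero]
  simp only [NormedSpace.exp_eq_tsum_rat]
  rw [tsum_eq_sum fun k hk => by rw [hpow k hk, smul_zero]]
  simp

section EuclideanSpace

variable {ι : Type*} [Fintype ι]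

theorem EuclideanSpace.real_inner_I_smul_left (u v : EuclideanSpace ℂ ι) :
    ⟪Complex.I • u, v⟫ = -⟪u, Complex.I • v⟫ := by
  simp only [PiLp.inner_apply, ← Finset.sum_neg_distrib]
  refine Finset.sum_congr rfl fun i _ => ?_
  simp [Complex.inner, Complex.mul_re, Complex.mul_im]
  ring

theorem EuclideanSpace.real_inner_I_smul_I_smul (u v : EuclideanSpace ℂ ι) :
    ⟪Complex.I • u, Complex.I • v⟫ = ⟪u, v⟫ := by
  simp only [PiLp.inner_apply]
  refine Finset.sum_congr rfl fun i _ => ?_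
  simp [Complex.inner, Complex.mul_re, Complex.mul_im]

theorem EuclideanSpace.real_inner_I_smul_self_left (u : EuclideanSpace ℂ ι) :
    ⟪Complex.I • u, u⟫ = 0 := by
  simp only [PiLp.inner_apply]
  refine Finset.sum_eq_zero fun i _ => ?_
  simp [Complex.inner, Complex.mul_re, Complex.mul_im]
  ring

end EuclideanSpace

theorem eq_zero_of_add_add_eq_zero_of_inner_eq_zero {F : Type*} [NormedAddCommGroup F]
    [InnerProductSpace ℝ F] {p q r : F} (h : p + q + r = 0) (hpq : ⟪p, q⟫ = 0)
    (hpr : ⟪p, r⟫ = 0) (hqr : ⟪q, r⟫ = 0) : q = 0 ∧ r = 0 := by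
  have hq : ⟪q, q⟫ = 0 := by
    have := congrArg (⟪q, ·⟫) h
    simp only [inner_add_right, inner_zero_right, real_inner_comm p q, hpq, hqr] at this
    linarith
  have hr : ⟪r, r⟫ = 0 := by
    have := congrArg (⟪r, ·⟫) h
    simp only [inner_add_right, inner_zero_right, real_inner_comm p r, real_inner_comm q r, hpr,
      hqr] at this
    linarith
  exact ⟨inner_self_eq_zero.1 hq, inner_self_eq_zero.1 hr⟩

theorem smul_eq_zero_of_smul_I_smul_add_smul_eq_zero {F : Type*} [AddCommGroup F] [Module ℂ F]
    [Module ℝ F] [IsScalarTower ℝ ℂ F] {a y : ℝ} {u : F}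
    (h : a • Complex.I • u + y • u = 0) : a • u = 0 ∧ y • u = 0 := by
  have h' : (algebraMap ℝ ℂ y + algebraMap ℝ ℂ a * Complex.I) • u = 0 := by
    rw [← h, add_smul, mul_smul, algebraMap_smul, algebraMap_smul, add_comm]
  rcases smul_eq_zero.1 h' with hc | hu
  · have hy : y = 0 := by simpa using congrArg Complex.re hc
    have ha : a = 0 := by simpa using congrArg Complex.im hc
    simp [ha, hy]
  · simp [hu]

namespace CHn

variable {n : ℕ}

theorem ad_inE_apply (U : E n) (Y : S n) :
    ad n (0, U, 0) Y = (0, (-(Y.1 / 2)) • U, ⟪Complex.I • U, Y.2.1⟫) := by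
  refine Prod.ext rfl (Prod.ext ?_ ?_)
  · show (2⁻¹ : ℝ) • ((0 : ℝ) • Y.2.1 - Y.1 • U) = _
    rw [zero_smul, zero_sub, smul_neg, smul_smul, inv_mul_eq_div, neg_smul]
  · show (0 : ℝ) * Y.2.2 - Y.1 * 0 + _ = _
    ring

theorem ad_inE_mul_self (U : E n) : ad n (0, U, 0) * ad n (0, U, 0) = 0 := by
  refine ContinuousLinearMap.ext fun Y => ?_
  rw [mul_apply_eq_comp, ad_inE_apply, ad_inE_apply]
  refine Prod.ext rfl (Prod.ext ?_ ?_)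
  · simp
  · simp [real_inner_smul_right, EuclideanSpace.real_inner_I_smul_self_left]

theorem expAd_inE_apply (U : E n) (Y : S n) :
    expAd n (0, U, 0) Y = (Y.1, Y.2.1 - (Y.1 / 2) • U, Y.2.2 + ⟪Complex.I • U, Y.2.1⟫) := by
  rw [expAd, NormedSpace.exp_eq_one_add_of_mul_self_eq_zero (ad_inE_mul_self U),
    add_apply, one_apply_eq_self, ad_inE_apply]
  refine Prod.ext (add_zero _) (Prod.ext ?_ rfl)
  simp [sub_eq_add_neg]

/-- The subspace `{aB + X + zZ | X + aK ∈ M}`. -/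
def sheared (M : Submodule ℝ (E n)) (K : E n) : Submodule ℝ (S n) :=
  M.comap ((LinearMap.fst ℝ (E n) ℝ).comp (LinearMap.snd ℝ ℝ (E n × ℝ)) +
    (LinearMap.fst ℝ ℝ (E n × ℝ)).smulRight K)

theorem mem_sheared {M : Submodule ℝ (E n)} {K : E n} {v : S n} :
    v ∈ sheared M K ↔ v.2.1 + v.1 • K ∈ M := Iff.rfl

theorem mem_span_B_sup_map_inE_sup_span_Z (M : Submodule ℝ (E n)) (v : S n) :
    v ∈ Submodule.span ℝ {B n} ⊔ Submodule.map (inE n) M ⊔ Submodule.span ℝ {Z n} ↔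
      v.2.1 ∈ M := by
  simp only [Submodule.mem_sup, Submodule.mem_span_singleton, Submodule.mem_map]
  constructor
  · rintro ⟨_, ⟨_, ⟨s, rfl⟩, _, ⟨X, hX, rfl⟩, rfl⟩, _, ⟨t, rfl⟩, rfl⟩
    simpa [B, Z, inE] using hX
  · intro hv
    refine ⟨_, ⟨_, ⟨v.1, rfl⟩, _, ⟨v.2.1, hv, rfl⟩, rfl⟩, _, ⟨v.2.2, rfl⟩, ?_⟩
    ext <;> simp [B, Z, inE]

theorem map_expAd_eq_sheared (M₁ M₂ : Submodule ℝ (E n)) (K : E n) :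
    Submodule.map (expAd n (0, (2 : ℝ) • K, 0)).toLinearMap
        (Submodule.span ℝ {B n} ⊔ Submodule.map (inE n) M₁ ⊔ Submodule.map (inE n) M₂ ⊔
          Submodule.span ℝ {Z n}) = sheared (M₁ ⊔ M₂) K := by
  have hexp : ∀ Y : S n, expAd n (0, (2 : ℝ) • K, 0) Y =
      (Y.1, Y.2.1 - Y.1 • K, Y.2.2 + 2 * ⟪Complex.I • K, Y.2.1⟫) := fun Y => by
    rw [expAd_inE_apply, smul_smul, div_mul_cancel₀ _ two_ne_zero, smul_comm,
      real_inner_smul_left]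
  rw [sup_assoc (Submodule.span ℝ {B n}), ← Submodule.map_sup]
  ext v
  simp only [Submodule.mem_map, mem_span_B_sup_map_inE_sup_span_Z, mem_sheared,
    ContinuousLinearMap.coe_coe, hexp]
  constructor
  · rintro ⟨Y, hY, rfl⟩
    simpa using hY
  · intro hv
    exact ⟨(v.1, v.2.1 + v.1 • K, v.2.2 - 2 * ⟪Complex.I • K, v.2.1 + v.1 • K⟫), hv,
      by simp⟩

theorem TotallyRealE.totallyRealS {𝔯 : Submodule ℝ (E n)} (h𝔯 : TotallyRealE n 𝔯)
    {V : Set (S n)} (hV : ∀ v ∈ V, v.1 = 0 ∧ v.2.1 ∈ 𝔯) : TotallyRealS n V := by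
  intro u hu v hv
  obtain ⟨hu1, hu2⟩ := hV u hu
  obtain ⟨hv1, hv2⟩ := hV v hv
  simp [sInner, Js, hu1, hv1, h𝔯 _ hu2 _ hv2]

theorem mem_span_sup_span_sup_map_inE_iff (𝔠 : Submodule ℝ (E n)) (T : E n) (w : S n) :
    w ∈ Submodule.span ℝ {((1, -(Complex.I • T), 0) : S n)} ⊔
        Submodule.span ℝ {((0, T, 1) : S n)} ⊔ Submodule.map (inE n) 𝔠 ↔
      ∃ C ∈ 𝔠, w.2.1 = C + w.2.2 • T - w.1 • (Complex.I • T) := by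
  have hcomb : ∀ (a y : ℝ) (C : E n), a • ((1, -(Complex.I • T), 0) : S n) + y • (0, T, 1) +
      inE n C = (a, C + y • T - a • (Complex.I • T), y) := fun a y C => by
    simp only [inE, LinearMap.coe_mk, AddHom.coe_mk, Prod.smul_mk, smul_eq_mul, Prod.mk_add_mk,
      smul_neg, mul_one, mul_zero, add_zero, zero_add, Prod.mk.injEq, true_and, and_true]
    abel
  simp only [Submodule.mem_sup, Submodule.mem_span_singleton, Submodule.mem_map]
  constructor
  · rintro ⟨_, ⟨_, ⟨a, rfl⟩, _, ⟨y, rfl⟩, rfl⟩, _, ⟨C, hC, rfl⟩, rfl⟩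
    exact ⟨C, hC, by rw [hcomb]⟩
  · rintro ⟨C, hC, hw⟩
    exact ⟨_, ⟨_, ⟨w.1, rfl⟩, _, ⟨w.2.2, rfl⟩, rfl⟩, _, ⟨C, hC, rfl⟩, by rw [hcomb, ← hw]⟩

theorem mem_map_inE_inf_orthogonal_sup_span_iff {𝔯 : Submodule ℝ (E n)} {T : E n}
    (hT : T ∈ 𝔯) (v : S n) :
    v ∈ Submodule.map (inE n) (𝔯 ⊓ (Submodule.span ℝ {T})ᗮ) ⊔
        Submodule.span ℝ {((0, T, -‖T‖ ^ 2) : S n)} ↔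
      v.1 = 0 ∧ v.2.1 ∈ 𝔯 ∧ v.2.2 = -⟪v.2.1, T⟫ := by
  simp only [Submodule.mem_sup, Submodule.mem_span_singleton, Submodule.mem_map,
    Submodule.mem_inf, Submodule.mem_orthogonal_singleton_iff_inner_right]
  constructor
  · rintro ⟨_, ⟨X, ⟨hX, hXT⟩, rfl⟩, _, ⟨c, rfl⟩, rfl⟩
    rw [real_inner_comm] at hXT
    refine ⟨by simp [inE], by simpa [inE] using add_mem hX (Submodule.smul_mem _ c hT), ?_⟩
    simp [inE, inner_add_left, real_inner_smul_left, hXT]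
  · obtain ⟨a, X, z⟩ := v
    dsimp only
    rintro ⟨rfl, hX, rfl⟩
    -- `c • T` is the orthogonal projection of `X` on `ℝT` (with `c = 0` when `T = 0`)
    set c := ⟪X, T⟫ / ‖T‖ ^ 2
    have hc : c * ‖T‖ ^ 2 = ⟪X, T⟫ := div_mul_cancel_of_imp fun h => by
      rw [sq_eq_zero_iff, norm_eq_zero] at h
      rw [h, inner_zero_right]
    refine ⟨_, ⟨X - c • T, ⟨sub_mem hX (Submodule.smul_mem _ c hT), ?_⟩, rfl⟩, _, ⟨c, rfl⟩, ?_⟩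
    · rw [inner_sub_right, real_inner_smul_right, real_inner_self_eq_norm_sq, hc,
        real_inner_comm, sub_self]
    · ext <;> simp [inE, ← hc]

section Sheared

variable {𝔠 𝔯 : Submodule ℝ (E n)} {T W : E n}

theorem I_smul_mem_orthogonal_sup (h𝔠 : IsComplexE n 𝔠) (h𝔯 : TotallyRealE n 𝔯)
    (h𝔯𝔠 : ∀ u ∈ 𝔯, ∀ v ∈ 𝔠, ⟪u, v⟫ = 0) {D : E n} (hD : D ∈ 𝔯) :
    Complex.I • D ∈ (𝔠 ⊔ 𝔯)ᗮ := by
  rw [← Submodule.inf_orthogonal]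
  refine ⟨(Submodule.mem_orthogonal _ _).2 fun u hu => ?_,
    (Submodule.mem_orthogonal _ _).2 fun u hu => ?_⟩
  · rw [real_inner_comm, EuclideanSpace.real_inner_I_smul_left, h𝔯𝔠 D hD _ (h𝔠 u hu), neg_zero]
  · rw [real_inner_comm, EuclideanSpace.real_inner_I_smul_left, real_inner_comm,
      h𝔯 u hu D hD, neg_zero]

theorem mem_orthogonal_sup_of_inner_eq_zero (h𝔠 : IsComplexE n 𝔠)
    (hW𝔠 : ∀ u ∈ 𝔠, ⟪W, u⟫ = 0) (hW𝔯 : ∀ u ∈ 𝔯, ⟪W, u⟫ = 0 ∧ ⟪W, Complex.I • u⟫ = 0) :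
    W ∈ (𝔠 ⊔ 𝔯)ᗮ ∧ Complex.I • W ∈ (𝔠 ⊔ 𝔯)ᗮ := by
  simp only [← Submodule.inf_orthogonal, Submodule.mem_inf, Submodule.mem_orthogonal']
  refine ⟨⟨hW𝔠, fun u hu => (hW𝔯 u hu).1⟩, fun u hu => ?_, fun u hu => ?_⟩
  · rw [EuclideanSpace.real_inner_I_smul_left, hW𝔠 _ (h𝔠 u hu), neg_zero]
  · rw [EuclideanSpace.real_inner_I_smul_left, (hW𝔯 u hu).2, neg_zero]

theorem mem_maxCS_sheared_iff (h𝔠 : IsComplexE n 𝔠) (h𝔯 : TotallyRealE n 𝔯)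
    (h𝔯𝔠 : ∀ u ∈ 𝔯, ∀ v ∈ 𝔠, ⟪u, v⟫ = 0) (hT : T ∈ 𝔯)
    (hW𝔠 : ∀ u ∈ 𝔠, ⟪W, u⟫ = 0) (hW𝔯 : ∀ u ∈ 𝔯, ⟪W, u⟫ = 0 ∧ ⟪W, Complex.I • u⟫ = 0)
    (w : S n) :
    w ∈ maxCS n (sheared (𝔠 ⊔ 𝔯) (Complex.I • T + W)) ↔
      ∃ C ∈ 𝔠, w.2.1 = C + w.2.2 • T - w.1 • (Complex.I • T + W) ∧
        w.1 • W = 0 ∧ w.2.2 • W = 0 := by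
  obtain ⟨a, X, y⟩ := w
  have hI : Complex.I • Complex.I • T = -T := by rw [smul_smul, Complex.I_mul_I, neg_one_smul]
  simp only [maxCS, Set.mem_ofPred_eq, SetLike.mem_coe, mem_sheared, Js, LinearMap.coe_mk,
    AddHom.coe_mk]
  constructor
  · rintro ⟨h1, h2⟩
    obtain ⟨C, hC, R, hR, hCR⟩ := Submodule.mem_sup.1 h1
    obtain ⟨C', hC', R', hR', hCR'⟩ := Submodule.mem_sup.1 h2
    -- the three summands lie in `𝔠 ⊕ 𝔯`, `J𝔯` and `ℂW`, which are mutually orthogonal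
    have hsum : (Complex.I • C - C' + (a • T - R')) + Complex.I • (R - y • T) +
        -(a • Complex.I • W + y • W) = 0 := by
      linear_combination (norm := module) Complex.I • hCR - hCR' + a • hI
    have hD : R - y • T ∈ 𝔯 := sub_mem hR (Submodule.smul_mem _ _ hT)
    have hp : Complex.I • C - C' + (a • T - R') ∈ 𝔠 ⊔ 𝔯 :=
      add_mem (Submodule.mem_sup_left (sub_mem (h𝔠 C hC) hC'))
        (Submodule.mem_sup_right (sub_mem (Submodule.smul_mem _ _ hT) hR'))
    obtain ⟨hW, hIW⟩ := mem_orthogonal_sup_of_inner_eq_zero h𝔠 hW𝔠 hW𝔯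
    have hr : -(a • Complex.I • W + y • W) ∈ (𝔠 ⊔ 𝔯)ᗮ :=
      neg_mem (add_mem (Submodule.smul_mem _ _ hIW) (Submodule.smul_mem _ _ hW))
    have hqr : ⟪Complex.I • (R - y • T), -(a • Complex.I • W + y • W)⟫ = 0 := by
      simp only [inner_neg_right, inner_add_right, real_inner_smul_right,
        EuclideanSpace.real_inner_I_smul_I_smul, real_inner_comm W, (hW𝔯 _ hD).1, (hW𝔯 _ hD).2]
      ring
    obtain ⟨hq, hr⟩ := eq_zero_of_add_add_eq_zero_of_inner_eq_zero hsum
      (Submodule.inner_right_of_mem_orthogonal hp (I_smul_mem_orthogonal_sup h𝔠 h𝔯 h𝔯𝔠 hD))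
      (Submodule.inner_right_of_mem_orthogonal hp hr) hqr
    have hRT : R = y • T := by
      rwa [smul_eq_zero, or_iff_right Complex.I_ne_zero, sub_eq_zero] at hq
    refine ⟨C, hC, ?_, smul_eq_zero_of_smul_I_smul_add_smul_eq_zero (neg_eq_zero.1 hr)⟩
    linear_combination (norm := module) hRT - hCR
  · rintro ⟨C, hC, rfl, haW, hyW⟩
    constructor
    · convert add_mem (Submodule.mem_sup_left hC)
        (Submodule.mem_sup_right (Submodule.smul_mem 𝔯 y hT)) using 1
      module
    · convert add_mem (Submodule.mem_sup_left (h𝔠 C hC))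
        (Submodule.mem_sup_right (Submodule.smul_mem 𝔯 a hT)) using 1
      linear_combination (norm := module) (-Complex.I) • haW - hyW - a • hI

theorem not_isCRS_sheared (h𝔠 : IsComplexE n 𝔠) (h𝔯 : TotallyRealE n 𝔯)
    (h𝔯𝔠 : ∀ u ∈ 𝔯, ∀ v ∈ 𝔠, ⟪u, v⟫ = 0) (hT : T ∈ 𝔯)
    (hW𝔠 : ∀ u ∈ 𝔠, ⟪W, u⟫ = 0) (hW𝔯 : ∀ u ∈ 𝔯, ⟪W, u⟫ = 0 ∧ ⟪W, Complex.I • u⟫ = 0)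
    (hW : W ≠ 0) : ¬ IsCRS n (sheared (𝔠 ⊔ 𝔯) (Complex.I • T + W)) := by
  set K := Complex.I • T + W
  have hmax : ∀ w ∈ maxCS n (sheared (𝔠 ⊔ 𝔯) K), w.1 = 0 ∧ w.2.2 = 0 ∧ ⟪K, w.2.1⟫ = 0 := by
    intro w hw
    obtain ⟨C, hC, hX, haW, hyW⟩ := (mem_maxCS_sheared_iff h𝔠 h𝔯 h𝔯𝔠 hT hW𝔠 hW𝔯 w).1 hw
    have ha := (smul_eq_zero.1 haW).resolve_right hW
    have hy := (smul_eq_zero.1 hyW).resolve_right hW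
    refine ⟨ha, hy, ?_⟩
    rw [hX, ha, hy, zero_smul, zero_smul, add_zero, sub_zero, inner_add_left,
      EuclideanSpace.real_inner_I_smul_left, h𝔯𝔠 T hT _ (h𝔠 C hC), hW𝔠 C hC, neg_zero, add_zero]
  intro hCR
  have h := hCR (1, -K, 0) (by simp [mem_sheared]) (Z n) (by simp [mem_sheared, Z])
    (fun w hw => by
      obtain ⟨h1, -, h3⟩ := hmax w hw
      simp [sInner, h1, inner_neg_left, h3])
    (fun w hw => by simp [sInner, Z, (hmax w hw).2.1])
  simp [sInner, Js, Z] at h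

theorem mem_maxCS_sheared_I_smul_iff (h𝔠 : IsComplexE n 𝔠) (h𝔯 : TotallyRealE n 𝔯)
    (h𝔯𝔠 : ∀ u ∈ 𝔯, ∀ v ∈ 𝔠, ⟪u, v⟫ = 0) (hT : T ∈ 𝔯) (w : S n) :
    w ∈ maxCS n (sheared (𝔠 ⊔ 𝔯) (Complex.I • T)) ↔
      ∃ C ∈ 𝔠, w.2.1 = C + w.2.2 • T - w.1 • (Complex.I • T) := by
  simpa using mem_maxCS_sheared_iff h𝔠 h𝔯 h𝔯𝔠 hT (W := 0) (by simp) (by simp) w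

theorem mem_sheared_I_smul_and_orthogonal_maxCS_iff (h𝔠 : IsComplexE n 𝔠)
    (h𝔯 : TotallyRealE n 𝔯) (h𝔯𝔠 : ∀ u ∈ 𝔯, ∀ v ∈ 𝔠, ⟪u, v⟫ = 0) (hT : T ∈ 𝔯) (v : S n) :
    (v ∈ sheared (𝔠 ⊔ 𝔯) (Complex.I • T) ∧
        ∀ w ∈ maxCS n (sheared (𝔠 ⊔ 𝔯) (Complex.I • T)), sInner n v w = 0) ↔
      v.1 = 0 ∧ v.2.1 ∈ 𝔯 ∧ v.2.2 = -⟪v.2.1, T⟫ := by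
  obtain ⟨a, X, z⟩ := v
  have hmax : ∀ (b y : ℝ), ∀ C ∈ 𝔠,
      ((b, C + y • T - b • Complex.I • T, y) : S n) ∈ maxCS n (sheared (𝔠 ⊔ 𝔯) (Complex.I • T)) :=
    fun b y C hC => (mem_maxCS_sheared_I_smul_iff h𝔠 h𝔯 h𝔯𝔠 hT _).2 ⟨C, hC, rfl⟩
  have hIT := I_smul_mem_orthogonal_sup h𝔠 h𝔯 h𝔯𝔠 hT
  simp only [mem_sheared]
  constructor
  · rintro ⟨hv, hperp⟩
    obtain ⟨C, hC, R, hR, hCR⟩ := Submodule.mem_sup.1 hv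
    have ha : a = 0 := by
      have h1 := hperp _ (hmax 1 0 0 (zero_mem _))
      have h2 := Submodule.inner_right_of_mem_orthogonal hv hIT
      simp only [sInner, inner_add_left, real_inner_smul_left, zero_smul, one_smul, mul_one,
        mul_zero, add_zero, inner_sub_right, inner_zero_right, real_inner_self_eq_norm_sq] at h1 h2
      have h : a * (1 + ‖Complex.I • T‖ ^ 2) = 0 := by linear_combination h1 + h2
      exact (mul_eq_zero.1 h).resolve_right (by positivity)
    subst ha
    have hC0 : C = 0 := by
      have h := hperp _ (hmax 0 0 C hC)
      simp only [sInner, zero_smul, add_zero, sub_zero, mul_zero, zero_add] at h hCR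
      rwa [← hCR, inner_add_left, h𝔯𝔠 R hR C hC, add_zero, inner_self_eq_zero] at h
    have hXR : X = R := by simpa [hC0] using hCR.symm
    subst hXR hC0
    refine ⟨rfl, hR, ?_⟩
    have h := hperp _ (hmax 0 1 0 (zero_mem _))
    simp only [sInner, mul_zero, one_smul, zero_add, zero_smul, sub_zero, mul_one] at h
    linarith
  · rintro ⟨rfl, hX, rfl⟩
    refine ⟨by simpa using Submodule.mem_sup_right hX, fun w hw => ?_⟩
    obtain ⟨C, hC, hw⟩ := (mem_maxCS_sheared_I_smul_iff h𝔠 h𝔯 h𝔯𝔠 hT w).1 hw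
    simp only [sInner, hw, inner_add_right, inner_sub_right, real_inner_smul_right,
      h𝔯𝔠 X hX C hC, Submodule.inner_right_of_mem_orthogonal (Submodule.mem_sup_right hX) hIT]
    ring

theorem isCRS_sheared_I_smul (h𝔠 : IsComplexE n 𝔠) (h𝔯 : TotallyRealE n 𝔯)
    (h𝔯𝔠 : ∀ u ∈ 𝔯, ∀ v ∈ 𝔠, ⟪u, v⟫ = 0) (hT : T ∈ 𝔯) :
    IsCRS n (sheared (𝔠 ⊔ 𝔯) (Complex.I • T)) := by
  intro u hu v hv hu' hv'
  refine h𝔯.totallyRealS (V := {v | v ∈ sheared (𝔠 ⊔ 𝔯) (Complex.I • T) ∧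
    ∀ w ∈ maxCS n (sheared (𝔠 ⊔ 𝔯) (Complex.I • T)), sInner n v w = 0})
    (fun v hv => ?_) u ⟨hu, hu'⟩ v ⟨hv, hv'⟩
  exact ((mem_sheared_I_smul_and_orthogonal_maxCS_iff h𝔠 h𝔯 h𝔯𝔠 hT v).1 hv).imp_right And.left

end Sheared

theorem statement13_general (n : ℕ) (𝔠 𝔯 : Submodule ℝ (E n))
    (h𝔠 : IsComplexE n 𝔠) (h𝔯 : TotallyRealE n 𝔯)
    (h𝔯𝔠 : ∀ u ∈ 𝔯, ∀ v ∈ 𝔠, ⟪u, v⟫ = 0)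
    (T : E n) (hT : T ∈ 𝔯) (W : E n)
    (hW𝔠 : ∀ u ∈ 𝔠, ⟪W, u⟫ = 0)
    (hW𝔯 : ∀ u ∈ 𝔯, ⟪W, u⟫ = 0 ∧ ⟪W, Complex.I • u⟫ = 0) :
    (IsCRS n
      ((Submodule.map
          (expAd n ((0, (2 : ℝ) • (Complex.I • T) + (2 : ℝ) • W, 0) : S n)).toLinearMap
          (Submodule.span ℝ {B n} ⊔ Submodule.map (inE n) 𝔠 ⊔ Submodule.map (inE n) 𝔯 ⊔
            Submodule.span ℝ {Z n}) : Submodule ℝ (S n)) : Set (S n)) ↔ W = 0) ∧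
    (W = 0 →
      maxCS n
        ((Submodule.map
            (expAd n ((0, (2 : ℝ) • (Complex.I • T) + (2 : ℝ) • W, 0) : S n)).toLinearMap
            (Submodule.span ℝ {B n} ⊔ Submodule.map (inE n) 𝔠 ⊔ Submodule.map (inE n) 𝔯 ⊔
              Submodule.span ℝ {Z n}) : Submodule ℝ (S n)) : Set (S n)) =
        ((Submodule.span ℝ {((1, -(Complex.I • T), 0) : S n)} ⊔
          Submodule.span ℝ {((0, T, 1) : S n)} ⊔ Submodule.map (inE n) 𝔠 :
            Submodule ℝ (S n)) : Set (S n)) ∧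
      {v : S n |
          v ∈ (Submodule.map
              (expAd n ((0, (2 : ℝ) • (Complex.I • T) + (2 : ℝ) • W, 0) : S n)).toLinearMap
              (Submodule.span ℝ {B n} ⊔ Submodule.map (inE n) 𝔠 ⊔ Submodule.map (inE n) 𝔯 ⊔
                Submodule.span ℝ {Z n}) : Submodule ℝ (S n)) ∧
          (∀ w ∈ maxCS n
            ((Submodule.map
                (expAd n ((0, (2 : ℝ) • (Complex.I • T) + (2 : ℝ) • W, 0) : S n)).toLinearMap
                (Submodule.span ℝ {B n} ⊔ Submodule.map (inE n) 𝔠 ⊔ Submodule.map (inE n) 𝔯 ⊔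
                  Submodule.span ℝ {Z n}) : Submodule ℝ (S n)) : Set (S n)),
            sInner n v w = 0)} =
        ((Submodule.map (inE n) (𝔯 ⊓ (Submodule.span ℝ {T})ᗮ) ⊔
          Submodule.span ℝ {((0, T, -‖T‖ ^ 2) : S n)} : Submodule ℝ (S n)) : Set (S n)) ∧
      TotallyRealS n
        ((Submodule.map (inE n) (𝔯 ⊓ (Submodule.span ℝ {T})ᗮ) ⊔
          Submodule.span ℝ {((0, T, -‖T‖ ^ 2) : S n)} : Submodule ℝ (S n)) : Set (S n))) := by
  rw [← smul_add, map_expAd_eq_sheared]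
  refine ⟨⟨fun hCR => by_contra fun hW => not_isCRS_sheared h𝔠 h𝔯 h𝔯𝔠 hT hW𝔠 hW𝔯 hW hCR,
    ?_⟩, ?_⟩ <;> rintro rfl <;> rw [add_zero]
  · exact isCRS_sheared_I_smul h𝔠 h𝔯 h𝔯𝔠 hT
  refine ⟨Set.ext fun w => ?_, Set.ext fun v => ?_, fun u hu v hv => ?_⟩
  · exact (mem_maxCS_sheared_I_smul_iff h𝔠 h𝔯 h𝔯𝔠 hT w).trans
      (mem_span_sup_span_sup_map_inE_iff 𝔠 T w).symm
  · exact (mem_sheared_I_smul_and_orthogonal_maxCS_iff h𝔠 h𝔯 h𝔯𝔠 hT v).trans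
      (mem_map_inE_inf_orthogonal_sup_span_iff hT v).symm
  · exact h𝔯.totallyRealS (fun v hv =>
      ((mem_map_inE_inf_orthogonal_sup_span_iff hT v).1 hv).imp_right And.left) u hu v hv

/-- for `𝔠` complex, `𝔯` totally real orthogonal to `𝔠`, `T ∈ 𝔯`, `W ⟂ 𝔠 ⊕ ℂ𝔯`:
`exp(ad(2JT+2W))(ℝB ⊕ 𝔠 ⊕ 𝔯 ⊕ ℝZ)` is a CR subspace of `𝔰` iff `W = 0`; in that case its
maximal complex subspace is `ℝ(B − JT) ⊕ ℝ(T + Z) ⊕ 𝔠`, whose orthogonal complement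
`(𝔯 ⊖ ℝT) ⊕ ℝ(T − ‖T‖²Z)` is totally real. -/
theorem statement13 (n : ℕ) (hn : 2 ≤ n) (𝔠 𝔯 : Submodule ℝ (E n))
    (h𝔠 : IsComplexE n 𝔠) (h𝔯 : TotallyRealE n 𝔯)
    (h𝔯𝔠 : ∀ u ∈ 𝔯, ∀ v ∈ 𝔠, ⟪u, v⟫ = 0)
    (T : E n) (hT : T ∈ 𝔯) (W : E n)
    (hW𝔠 : ∀ u ∈ 𝔠, ⟪W, u⟫ = 0)
    (hW𝔯 : ∀ u ∈ 𝔯, ⟪W, u⟫ = 0 ∧ ⟪W, Complex.I • u⟫ = 0) :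
    (IsCRS n
      ((Submodule.map
          (expAd n ((0, (2 : ℝ) • (Complex.I • T) + (2 : ℝ) • W, 0) : S n)).toLinearMap
          (Submodule.span ℝ {B n} ⊔ Submodule.map (inE n) 𝔠 ⊔ Submodule.map (inE n) 𝔯 ⊔
            Submodule.span ℝ {Z n}) : Submodule ℝ (S n)) : Set (S n)) ↔ W = 0) ∧
    (W = 0 →
      maxCS n
        ((Submodule.map
            (expAd n ((0, (2 : ℝ) • (Complex.I • T) + (2 : ℝ) • W, 0) : S n)).toLinearMap
            (Submodule.span ℝ {B n} ⊔ Submodule.map (inE n) 𝔠 ⊔ Submodule.map (inE n) 𝔯 ⊔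
              Submodule.span ℝ {Z n}) : Submodule ℝ (S n)) : Set (S n)) =
        ((Submodule.span ℝ {((1, -(Complex.I • T), 0) : S n)} ⊔
          Submodule.span ℝ {((0, T, 1) : S n)} ⊔ Submodule.map (inE n) 𝔠 :
            Submodule ℝ (S n)) : Set (S n)) ∧
      {v : S n |
          v ∈ (Submodule.map
              (expAd n ((0, (2 : ℝ) • (Complex.I • T) + (2 : ℝ) • W, 0) : S n)).toLinearMap
              (Submodule.span ℝ {B n} ⊔ Submodule.map (inE n) 𝔠 ⊔ Submodule.map (inE n) 𝔯 ⊔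
                Submodule.span ℝ {Z n}) : Submodule ℝ (S n)) ∧
          (∀ w ∈ maxCS n
            ((Submodule.map
                (expAd n ((0, (2 : ℝ) • (Complex.I • T) + (2 : ℝ) • W, 0) : S n)).toLinearMap
                (Submodule.span ℝ {B n} ⊔ Submodule.map (inE n) 𝔠 ⊔ Submodule.map (inE n) 𝔯 ⊔
                  Submodule.span ℝ {Z n}) : Submodule ℝ (S n)) : Set (S n)),
            sInner n v w = 0)} =
        ((Submodule.map (inE n) (𝔯 ⊓ (Submodule.span ℝ {T})ᗮ) ⊔
          Submodule.span ℝ {((0, T, -‖T‖ ^ 2) : S n)} : Submodule ℝ (S n)) : Set (S n)) ∧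
      TotallyRealS n
        ((Submodule.map (inE n) (𝔯 ⊓ (Submodule.span ℝ {T})ᗮ) ⊔
          Submodule.span ℝ {((0, T, -‖T‖ ^ 2) : S n)} : Submodule ℝ (S n)) : Set (S n))) :=
  statement13_general n 𝔠 𝔯 h𝔠 h𝔯 h𝔯𝔠 T hT W hW𝔠 hW𝔯

end CHn
end
end

section
/- For every X ∈ E and every real subspace 𝔴 of E, one has exp(ad(2X))( ℝ(B+X) ⊕ 𝔴 ⊕ ℝZ ) = ℝB ⊕ 𝔴 ⊕ ℝZ. -/
open scoped RealInnerProductSpace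

noncomputable section

/-! For `U ∈ E` one has `⟪JU, U⟫ = 0`, so `ad(U)² = 0` and `exp(ad U) = 1 + ad U`. With
`U = 2X` this map sends `B + X` to `B`, fixes `Z`, and moves each `w ∈ 𝔴` by a multiple of `Z`;
since `ℝZ` is a summand on both sides, the image of `𝔴 ⊕ ℝZ` is again `𝔴 ⊕ ℝZ`. -/

theorem NormedSpace.exp_eq_sum_of_pow_eq_zero {𝔸 : Type*} [Ring 𝔸] [Algebra ℚ 𝔸]
    [TopologicalSpace 𝔸] [IsTopologicalRing 𝔸] {a : 𝔸} {k : ℕ} (h : a ^ k = 0) :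
    NormedSpace.exp a = ∑ i ∈ Finset.range k, (i.factorial⁻¹ : ℚ) • a ^ i := by
  rw [NormedSpace.exp_eq_tsum_rat]
  refine tsum_eq_sum fun i hi => ?_
  rw [pow_eq_zero_of_le (by simpa using hi) h, smul_zero]

theorem NormedSpace.exp_eq_one_add_of_sq_eq_zero {𝔸 : Type*} [Ring 𝔸] [Algebra ℚ 𝔸]
    [TopologicalSpace 𝔸] [IsTopologicalRing 𝔸] {a : 𝔸} (h : a ^ 2 = 0) :
    NormedSpace.exp a = 1 + a := by
  simp [NormedSpace.exp_eq_sum_of_pow_eq_zero h, Finset.sum_range_succ]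

theorem Submodule.map_sup_eq_map_sup_of_sub_mem {R M M₂ : Type*} [Ring R] [AddCommGroup M]
    [Module R M] [AddCommGroup M₂] [Module R M₂] {f g : M →ₗ[R] M₂} {p : Submodule R M}
    {N : Submodule R M₂} (h : ∀ x ∈ p, f x - g x ∈ N) : p.map f ⊔ N = p.map g ⊔ N := by
  have key : ∀ f g : M →ₗ[R] M₂, (∀ x ∈ p, f x - g x ∈ N) → p.map f ⊔ N ≤ p.map g ⊔ N := by
    refine fun f g h => sup_le (Submodule.map_le_iff_le_comap.2 fun x hx => ?_) le_sup_right
    rw [Submodule.mem_comap, ← add_sub_cancel (g x) (f x)]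
    exact Submodule.add_mem_sup (Submodule.mem_map_of_mem hx) (h x hx)
  exact le_antisymm (key f g h) (key g f fun x hx => by simpa using N.neg_mem (h x hx))

namespace CHn

section

variable (n : ℕ)

theorem ad_inE_apply_s14 (U : E n) (q : S n) :
    ad n (inE n U) q = (0, -((2⁻¹ * q.1) • U), ⟪Complex.I • U, q.2.1⟫) := by
  refine Prod.ext rfl (Prod.ext ?_ ?_)
  · show (2⁻¹ : ℝ) • ((0 : ℝ) • q.2.1 - q.1 • U) = _
    module
  · show (0 : ℝ) * q.2.2 - q.1 * 0 + ⟪Complex.I • U, q.2.1⟫ = _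
    ring

theorem inner_I_smul_self (U : E n) : ⟪Complex.I • U, U⟫ = 0 := by
  rw [PiLp.inner_apply]
  exact Finset.sum_eq_zero fun i _ => by rw [real_inner_comm]; exact real_inner_I_smul_self ℂ (U i)

theorem ad_inE_sq (U : E n) : ad n (inE n U) ^ 2 = 0 := by
  refine ContinuousLinearMap.ext fun q => ?_
  rw [pow_two, mul_apply_eq_comp, ad_inE_apply_s14, ad_inE_apply_s14]
  simp [inner_neg_right, real_inner_smul_right, inner_I_smul_self]

theorem expAd_inE (U : E n) : expAd n (inE n U) = 1 + ad n (inE n U) :=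
  NormedSpace.exp_eq_one_add_of_sq_eq_zero (ad_inE_sq n U)

end

theorem statement14_general (n : ℕ) (X : E n) (𝔴 : Submodule ℝ (E n)) :
    Submodule.map (expAd n ((0, (2 : ℝ) • X, 0) : S n)).toLinearMap
        (Submodule.span ℝ {((1, X, 0) : S n)} ⊔ Submodule.map (inE n) 𝔴 ⊔
          Submodule.span ℝ {Z n}) =
      Submodule.span ℝ {B n} ⊔ Submodule.map (inE n) 𝔴 ⊔ Submodule.span ℝ {Z n} := by
  set f := (expAd n ((0, (2 : ℝ) • X, 0) : S n)).toLinearMap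
  have hf (p : S n) : f p = p + ad n (inE n ((2 : ℝ) • X)) p := by
    show expAd n (inE n _) p = _
    rw [expAd_inE]
    rfl
  have hB : f (1, X, 0) = B n := by
    rw [hf, ad_inE_apply_s14]
    refine Prod.ext (by simp [B]) (Prod.ext ?_ ?_)
    · simp [B, smul_smul]
    · show 0 + ⟪Complex.I • ((2 : ℝ) • X), X⟫ = 0
      rw [smul_comm, real_inner_smul_left, inner_I_smul_self]
      ring
  have hZ : f (Z n) = Z n := by
    rw [hf, ad_inE_apply_s14]
    simp [Z]
  have hw : ∀ w ∈ 𝔴, (f ∘ₗ inE n) w - inE n w ∈ Submodule.span ℝ {Z n} := fun w _ => by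
    rw [LinearMap.comp_apply, hf, add_sub_cancel_left, Submodule.mem_span_singleton]
    refine ⟨⟪Complex.I • ((2 : ℝ) • X), w⟫, ?_⟩
    rw [ad_inE_apply_s14]
    simp [Z, inE]
  rw [Submodule.map_sup, Submodule.map_sup, Submodule.map_span, Submodule.map_span,
    Set.image_singleton, Set.image_singleton, hB, hZ, ← Submodule.map_comp, sup_assoc,
    sup_assoc, Submodule.map_sup_eq_map_sup_of_sub_mem hw]

/-- for every `X ∈ E` and every real subspace `𝔴` of `E`:
`exp(ad(2X))(ℝ(B+X) ⊕ 𝔴 ⊕ ℝZ) = ℝB ⊕ 𝔴 ⊕ ℝZ`. -/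
theorem statement14 (n : ℕ) (hn : 2 ≤ n) (X : E n) (𝔴 : Submodule ℝ (E n)) :
    Submodule.map (expAd n ((0, (2 : ℝ) • X, 0) : S n)).toLinearMap
        (Submodule.span ℝ {((1, X, 0) : S n)} ⊔ Submodule.map (inE n) 𝔴 ⊔
          Submodule.span ℝ {Z n}) =
      Submodule.span ℝ {B n} ⊔ Submodule.map (inE n) 𝔴 ⊔ Submodule.span ℝ {Z n} :=
  statement14_general n X 𝔴

end CHn
end
end

section
/- Let 𝔴 be a real subspace of E and let X ∈ E be orthogonal to 𝔴. If the subspace 𝔥 = ℝ(B+X) ⊕ 𝔴 ⊕ ℝZ is a CR subspace of 𝔰, then JX ∈ 𝔴 and 𝔴 is a CR subspace of E. -/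
/-!
In a CR subspace `V` of `𝔰`, `J` maps the orthogonal complement of `V ∩ JV` in `V` into `Vᗮ`.
For `V = 𝔥`, write `B + X = m + p` with `m ∈ 𝔥 ∩ J𝔥` and `p ⊥ 𝔥 ∩ J𝔥`. Pairing `Jp` with `Z ∈ 𝔥`
kills the `B`-component of `p`, so `p ∈ 𝔴 ⊕ ℝZ` is orthogonal to `B + X` (as `X ⊥ 𝔴`) and to `m`,
hence `p = 0`. Thus `B + X ∈ 𝔥 ∩ J𝔥` and `J(B + X) = JX + Z ∈ 𝔥`, i.e. `JX ∈ 𝔴`. Now any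
`u ∈ 𝔴` orthogonal to `𝔴 ∩ J𝔴` lifts to `u - ⟪u, JX⟫Z ∈ 𝔥`, which is orthogonal to `𝔥 ∩ J𝔥`
(the correction term takes care of `J(B + X)`), so `Ju ⊥ 𝔴`.
-/

open scoped RealInnerProductSpace

noncomputable section

namespace CHn

variable (n : ℕ)

section Ambient

variable {n : ℕ}

lemma real_inner_I_smul_left {ι : Type*} [Fintype ι] (U V : EuclideanSpace ℂ ι) :
    ⟪Complex.I • U, V⟫ = -⟪U, Complex.I • V⟫ := by
  simp only [PiLp.inner_apply, PiLp.smul_apply, ← Finset.sum_neg_distrib]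
  refine Finset.sum_congr rfl fun i _ => ?_
  simp only [Complex.inner, smul_eq_mul, Complex.mul_re, Complex.mul_im, Complex.conj_re,
    Complex.conj_im, Complex.I_re, Complex.I_im]
  ring

lemma Js_apply (p : S n) : Js n p = (-p.2.2, Complex.I • p.2.1, p.1) := rfl

lemma inE_apply (U : E n) : inE n U = (0, U, 0) := rfl

lemma Js_Js (p : S n) : Js n (Js n p) = -p := by
  refine Prod.ext ?_ (Prod.ext ?_ ?_) <;> simp [Js_apply, smul_smul]

lemma sInner_Js_left (u v : S n) : sInner n (Js n u) v = -sInner n u (Js n v) := by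
  simp only [sInner, Js_apply, real_inner_I_smul_left]
  ring

lemma sInner_add_right (u v w : S n) : sInner n u (v + w) = sInner n u v + sInner n u w := by
  simp only [sInner, Prod.fst_add, Prod.snd_add, inner_add_right]
  ring

lemma eq_zero_of_sInner_self_eq_zero {p : S n} (h : sInner n p p = 0) : p = 0 := by
  have h₁ : 0 ≤ p.1 * p.1 := mul_self_nonneg _
  have h₂ : 0 ≤ ⟪p.2.1, p.2.1⟫ := real_inner_self_nonneg
  have h₃ : 0 ≤ p.2.2 * p.2.2 := mul_self_nonneg _
  simp only [sInner] at h
  refine Prod.ext ?_ (Prod.ext ?_ ?_)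
  · exact mul_self_eq_zero.mp (by linarith : p.1 * p.1 = 0)
  · exact inner_self_eq_zero.mp (by linarith : ⟪p.2.1, p.2.1⟫ = 0)
  · exact mul_self_eq_zero.mp (by linarith : p.2.2 * p.2.2 = 0)

def toL2 : S n ≃ₗ[ℝ] WithLp 2 (ℝ × WithLp 2 (E n × ℝ)) :=
  ((LinearEquiv.refl ℝ ℝ).prodCongr (WithLp.linearEquiv 2 ℝ _).symm).trans
    (WithLp.linearEquiv 2 ℝ _).symm

lemma sInner_eq_inner_toL2 (u v : S n) : sInner n u v = ⟪toL2 u, toL2 v⟫ := by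
  simp [WithLp.prod_inner_apply, sInner, toL2, RCLike.inner_apply]
  ring

lemma exists_add_sInner_eq_zero (M : Submodule ℝ (S n)) (v : S n) :
    ∃ m ∈ M, ∃ t, v = m + t ∧ ∀ h ∈ M, sInner n t h = 0 := by
  obtain ⟨m, hm, t, ht, hv⟩ :=
    (M.map (toL2 (n := n)).toLinearMap).exists_add_mem_mem_orthogonal (toL2 v)
  obtain ⟨m, hmM, rfl⟩ := Submodule.mem_map.mp hm
  refine ⟨m, hmM, toL2.symm t, ?_, fun h hh => ?_⟩
  · simpa using congrArg toL2.symm hv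
  · rw [sInner_eq_inner_toL2, LinearEquiv.apply_symm_apply, real_inner_comm]
    exact (Submodule.mem_orthogonal _ _).mp ht _ (Submodule.mem_map_of_mem hh)

end Ambient

section CR

variable {n : ℕ}

/-- The submodule whose carrier is `maxCS n V`. -/
def maxCSub (V : Submodule ℝ (S n)) : Submodule ℝ (S n) := V ⊓ V.comap (Js n)

lemma Js_mem_maxCSub {V : Submodule ℝ (S n)} {m : S n} (hm : m ∈ maxCSub V) :
    Js n m ∈ maxCSub V :=
  ⟨hm.2, by simpa [Js_Js] using V.neg_mem hm.1⟩

/-- `Jp` is orthogonal to `V ∩ JV` by skewness of `J`, and to the rest of `V` by the CR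
condition. -/
lemma IsCRS.sInner_Js_eq_zero {V : Submodule ℝ (S n)} (hV : IsCRS n V) {p : S n} (hp : p ∈ V)
    (hpM : ∀ w ∈ maxCSub V, sInner n p w = 0) {v : S n} (hv : v ∈ V) :
    sInner n (Js n p) v = 0 := by
  obtain ⟨m, hm, t, rfl, ht⟩ := exists_add_sInner_eq_zero (maxCSub V) v
  have htV : t ∈ V := by simpa using V.sub_mem hv hm.1
  rw [sInner_add_right, sInner_Js_left, hpM _ (Js_mem_maxCSub hm), hV p hp t htV hpM ht]
  simp

end CR

section Extension

variable {n : ℕ}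

def 𝔥 (𝔴 : Submodule ℝ (E n)) (X : E n) : Submodule ℝ (S n) :=
  Submodule.span ℝ {((1, X, 0) : S n)} ⊔ Submodule.map (inE n) 𝔴 ⊔ Submodule.span ℝ {Z n}

variable {𝔴 : Submodule ℝ (E n)} {X : E n}

lemma mem_𝔥_iff {p : S n} : p ∈ 𝔥 𝔴 X ↔ ∃ a x : ℝ, ∃ w ∈ 𝔴, p = (a, a • X + w, x) := by
  have hdecomp : ∀ (a x : ℝ) (w : E n),
      a • ((1, X, 0) : S n) + inE n w + x • Z n = (a, a • X + w, x) := fun a x w => by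
    refine Prod.ext ?_ (Prod.ext ?_ ?_) <;> simp [inE_apply, Z]
  constructor
  · intro hp
    obtain ⟨q, hq, r, hr, rfl⟩ := Submodule.mem_sup.mp hp
    obtain ⟨s, hs, t, ht, rfl⟩ := Submodule.mem_sup.mp hq
    obtain ⟨a, rfl⟩ := Submodule.mem_span_singleton.mp hs
    obtain ⟨w, hw, rfl⟩ := Submodule.mem_map.mp ht
    obtain ⟨x, rfl⟩ := Submodule.mem_span_singleton.mp hr
    exact ⟨a, x, w, hw, hdecomp a x w⟩
  · rintro ⟨a, x, w, hw, rfl⟩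
    rw [← hdecomp]
    refine add_mem (add_mem ?_ ?_) ?_
    · exact Submodule.mem_sup_left (Submodule.mem_sup_left
        (Submodule.smul_mem _ _ (Submodule.mem_span_singleton_self _)))
    · exact Submodule.mem_sup_left (Submodule.mem_sup_right ⟨w, hw, rfl⟩)
    · exact Submodule.mem_sup_right
        (Submodule.smul_mem _ _ (Submodule.mem_span_singleton_self _))

lemma mk_zero_mem_𝔥_iff {U : E n} {x : ℝ} : ((0, U, x) : S n) ∈ 𝔥 𝔴 X ↔ U ∈ 𝔴 := by
  refine mem_𝔥_iff.trans ⟨?_, fun hU => ⟨0, x, U, hU, by simp⟩⟩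
  rintro ⟨a, x', w, hw, h⟩
  simp only [Prod.mk.injEq] at h
  obtain ⟨rfl, rfl, -⟩ := h
  simpa using hw

lemma BX_mem_maxCSub (hX : ∀ u ∈ 𝔴, ⟪X, u⟫ = 0) (hCR : IsCRS n (𝔥 𝔴 X)) :
    ((1, X, 0) : S n) ∈ maxCSub (𝔥 𝔴 X) := by
  obtain ⟨m, hm, p, hBX, hp⟩ := exists_add_sInner_eq_zero (maxCSub (𝔥 𝔴 X)) ((1, X, 0) : S n)
  have hBX𝔥 : ((1, X, 0) : S n) ∈ 𝔥 𝔴 X := mem_𝔥_iff.mpr ⟨1, 0, 0, 𝔴.zero_mem, by simp⟩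
  have hp𝔥 : p ∈ 𝔥 𝔴 X := by simpa [hBX] using (𝔥 𝔴 X).sub_mem hBX𝔥 hm.1
  have hp₁ : p.1 = 0 := by
    have hZ : Z n ∈ 𝔥 𝔴 X := mk_zero_mem_𝔥_iff.mpr 𝔴.zero_mem
    simpa [sInner, Js_apply, Z] using hCR.sInner_Js_eq_zero hp𝔥 hp hZ
  have hp₂ : p.2.1 ∈ 𝔴 := mk_zero_mem_𝔥_iff.mp (by rwa [← hp₁])
  have hpp : sInner n p p = 0 := by
    have hpBX : sInner n p ((1, X, 0) : S n) = 0 := by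
      simp [sInner, hp₁, real_inner_comm, hX _ hp₂]
    rwa [hBX, sInner_add_right, hp m hm, zero_add] at hpBX
  rwa [hBX, eq_zero_of_sInner_self_eq_zero hpp, add_zero]

lemma I_smul_mem_of_BX_mem_maxCSub (hBX : ((1, X, 0) : S n) ∈ maxCSub (𝔥 𝔴 X)) :
    Complex.I • X ∈ 𝔴 :=
  (mk_zero_mem_𝔥_iff (x := 1)).mp (by simpa [Js_apply] using hBX.2)

lemma sub_smul_mem_maxCE (hBX : ((1, X, 0) : S n) ∈ maxCSub (𝔥 𝔴 X)) {a x : ℝ} {w : E n}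
    (hM : ((a, a • X + w, x) : S n) ∈ maxCSub (𝔥 𝔴 X)) :
    w - x • Complex.I • X ∈ maxCE n 𝔴 := by
  have h₀ : ((0, w - x • Complex.I • X, 0) : S n) ∈ maxCSub (𝔥 𝔴 X) := by
    have he : ((0, w - x • Complex.I • X, 0) : S n) =
        ((a, a • X + w, x) : S n) - a • ((1, X, 0) : S n) - x • Js n ((1, X, 0) : S n) := by
      refine Prod.ext ?_ (Prod.ext ?_ ?_) <;> simp [Js_apply]
    rw [he]
    exact sub_mem (sub_mem hM (Submodule.smul_mem _ _ hBX))
      (Submodule.smul_mem _ _ (Js_mem_maxCSub hBX))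
  exact ⟨mk_zero_mem_𝔥_iff.mp h₀.1,
    (mk_zero_mem_𝔥_iff (x := 0)).mp (by simpa [Js_apply] using h₀.2)⟩

lemma sInner_lift_eq_zero (hX : ∀ u ∈ 𝔴, ⟪X, u⟫ = 0)
    (hBX : ((1, X, 0) : S n) ∈ maxCSub (𝔥 𝔴 X)) {u : E n} (hu : u ∈ 𝔴)
    (huM : ∀ w ∈ maxCE n 𝔴, ⟪u, w⟫ = 0) {h : S n} (hh : h ∈ maxCSub (𝔥 𝔴 X)) :
    sInner n ((0, u, -⟪u, Complex.I • X⟫) : S n) h = 0 := by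
  obtain ⟨a, x, w, -, rfl⟩ := mem_𝔥_iff.mp hh.1
  have hw := huM _ (sub_smul_mem_maxCE hBX hh)
  rw [inner_sub_right, real_inner_smul_right] at hw
  have huX : ⟪u, X⟫ = 0 := by rw [real_inner_comm]; exact hX u hu
  simp only [sInner, inner_add_right, real_inner_smul_right, huX]
  linarith

end Extension

theorem statement15_general (n : ℕ) (𝔴 : Submodule ℝ (E n)) (X : E n)
    (hX : ∀ u ∈ 𝔴, ⟪X, u⟫ = 0)
    (hCR : IsCRS n
      ((Submodule.span ℝ {((1, X, 0) : S n)} ⊔ Submodule.map (inE n) 𝔴 ⊔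
        Submodule.span ℝ {Z n} : Submodule ℝ (S n)) : Set (S n))) :
    Complex.I • X ∈ 𝔴 ∧ IsCRE n 𝔴 := by
  have hBX := BX_mem_maxCSub hX hCR
  refine ⟨I_smul_mem_of_BX_mem_maxCSub hBX, fun u hu v hv huM _ => ?_⟩
  have hlift : ((0, u, -⟪u, Complex.I • X⟫) : S n) ∈ 𝔥 𝔴 X := mk_zero_mem_𝔥_iff.mpr hu
  have hv𝔥 : inE n v ∈ 𝔥 𝔴 X := mk_zero_mem_𝔥_iff.mpr hv
  simpa [sInner, Js_apply, inE_apply] using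
    hCR.sInner_Js_eq_zero hlift (fun h hh => sInner_lift_eq_zero hX hBX hu huM hh) hv𝔥

/-- for `𝔴` a real subspace of `E` and `X ∈ E` orthogonal to `𝔴`, if
`𝔥 = ℝ(B+X) ⊕ 𝔴 ⊕ ℝZ` is a CR subspace of `𝔰`, then `JX ∈ 𝔴` and `𝔴` is a CR subspace of `E`. -/
theorem statement15 (n : ℕ) (hn : 2 ≤ n) (𝔴 : Submodule ℝ (E n)) (X : E n)
    (hX : ∀ u ∈ 𝔴, ⟪X, u⟫ = 0)
    (hCR : IsCRS n
      ((Submodule.span ℝ {((1, X, 0) : S n)} ⊔ Submodule.map (inE n) 𝔴 ⊔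
        Submodule.span ℝ {Z n} : Submodule ℝ (S n)) : Set (S n))) :
    Complex.I • X ∈ 𝔴 ∧ IsCRE n 𝔴 :=
  statement15_general n 𝔴 X hX hCR

end CHn
end
end

section
/- For every real number a ≥ 5, the map F: [0,∞) × [0,∞) → [0,∞) × [0,∞) defined by F(z,w) = ( (z+w)/(1+z+w), z(a(1+z) + (a+3)w)/(1+z+w)² ) is injective. -/
/-!
The first coordinate `s / (1 + s)` is strictly increasing in `s = z + w`, so it determines `z + w`.
With `s` fixed, the numerator of the second coordinate is `z (a + (a + 3) s - 3 z)`, a quadratic in `z`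
whose vertex lies beyond `s` as soon as `a ≥ 3`, so it is injective on `[0, s]`.
-/

open Set

lemma injOn_div_one_add : InjOn (fun s : ℝ => s / (1 + s)) (Ioi (-1)) := by
  intro s hs t ht hst
  simp only [mem_Ioi] at hs ht
  rw [div_eq_div_iff (by linarith) (by linarith)] at hst
  linarith

lemma injOn_mul_add_sub_mul {a s : ℝ} (ha : 3 ≤ a) :
    InjOn (fun z : ℝ => z * (a + (a + 3) * s - 3 * z)) (Icc 0 s) := by
  rintro z₁ ⟨hz₁, hz₁s⟩ z₂ ⟨hz₂, hz₂s⟩ hz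
  have hfactor : (z₁ - z₂) * (a + (a + 3) * s - 3 * (z₁ + z₂)) = 0 := by
    linear_combination hz
  have hpos : 0 < a + (a + 3) * s - 3 * (z₁ + z₂) := by
    nlinarith [mul_nonneg (sub_nonneg.2 ha) (hz₁.trans hz₁s)]
  linarith [(mul_eq_zero.1 hfactor).resolve_right hpos.ne']

/-- For every real `a ≥ 5`, the map
`F(z,w) = ((z+w)/(1+z+w), z(a(1+z) + (a+3)w)/(1+z+w)²)` is injective on `[0,∞) × [0,∞)`. -/
theorem statement17 (a : ℝ) (ha : 5 ≤ a) :
    Set.InjOn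
      (fun p : ℝ × ℝ =>
        ((p.1 + p.2) / (1 + p.1 + p.2),
          p.1 * (a * (1 + p.1) + (a + 3) * p.2) / (1 + p.1 + p.2) ^ 2))
      (Set.Ici 0 ×ˢ Set.Ici 0) := by
  rintro ⟨z₁, w₁⟩ ⟨hz₁, hw₁⟩ ⟨z₂, w₂⟩ ⟨hz₂, hw₂⟩ h
  simp only [mem_Ici] at hz₁ hw₁ hz₂ hw₂
  obtain ⟨hfst, hsnd⟩ := Prod.mk.inj h
  dsimp only at hfst hsnd
  have hsum : z₁ + w₁ = z₂ + w₂ := by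
    refine injOn_div_one_add (mem_Ioi.2 (by linarith)) (mem_Ioi.2 (by linarith)) ?_
    simpa only [add_assoc] using hfst
  have hden : 1 + z₁ + w₁ ≠ 0 := by linarith
  rw [add_assoc 1 z₁, add_assoc 1 z₂, ← hsum, ← add_assoc,
    div_left_inj' (pow_ne_zero 2 hden)] at hsnd
  have hz : z₁ = z₂ := by
    refine injOn_mul_add_sub_mul (a := a) (s := z₁ + w₁) (by linarith) ⟨hz₁, by linarith⟩
      ⟨hz₂, by linarith⟩ ?_
    simp only
    linear_combination hsnd - (a + 3) * z₂ * hsum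
  ext <;> simp only <;> linarith
end
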